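/- Fix a complex number q with 0 < |q| < 1, and let (a_i)_{i≥0} and (f_j)_{j≥0} be sequences of complex numbers. Then the following two conditions are equivalent: (1) for every j ≥ 0, f_j = ∑_{i=0}^{j} q^{−i(j−i)} C_q(j+i, 2i) · a_i; (2) for every i ≥ 0, a_i = ∑_{j=0}^{i} (−1)^{i+j} q^{−(i−j)(i+j−1)/2} C_q(2i, i−j) · ([2j+1]_q / [i+j+1]_q) · f_j. (Note (i−j)(i+j−1) is always even, so all exponents of q are integers.) -/

import Mathlib

/-- The q-Pochhammer symbol `(a;q)_m = ∏_{l=0}^{m-1} (1 - a q^l)`. -/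
noncomputable def qPoch (a q : ℂ) (m : ℕ) : ℂ := ∏ l ∈ Finset.range m, (1 - a * q ^ l)

/-- The Gaussian binomial coefficient `C_q(m,r) = (q;q)_m / ((q;q)_r (q;q)_{m-r})`. -/
noncomputable def qBinom (q : ℂ) (m r : ℕ) : ℂ :=
  qPoch q q m / (qPoch q q r * qPoch q q (m - r))

/-- The q-integer `[m]_q = (1 - q^m)/(1 - q)`. -/
noncomputable def qInt (q : ℂ) (m : ℕ) : ℂ := (1 - q ^ m) / (1 - q)

/-!
Write `f = M a` and `a = N f` for the two lower triangular transforms. It suffices to show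
`N M = 1`: the diagonal of `N` is then invertible, so `N` is injective on sequences and the
converse follows from `N (M a) = a = N f`.

For `k ≤ j` the entry `M_{jk}` is, up to a factor depending only on `k`, the product
`∏_{m<k} (y_j - y_m)` with `y_j = q^j + q^{-j-1}`. This is a polynomial of degree `k` in `y_j`,
hence a combination of the symmetric Laurent monomials `q^{jd} + q^{-(j+1)d}` with `|d| ≤ k`.
Row `i` of `N` annihilates each of these with `|d| < i`: after multiplying by `1 - q^{2i+1}`
and folding the sum over `j` at `t = i - j`, it becomes a combination of the q-binomial
expansions of `∏_{l=0}^{2i} (1 - q^{l+1-i±d})`, each of which contains a vanishing factor.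
-/

open Finset

section LowerTriangular

variable {R : Type*} [CommRing R]

theorem sum_mul_sum_lowerTriangular (A B : ℕ → ℕ → R) (a : ℕ → R) (i : ℕ) :
    ∑ j ∈ range (i + 1), B i j * ∑ k ∈ range (j + 1), A j k * a k =
      ∑ k ∈ range (i + 1), (∑ j ∈ Icc k i, B i j * A j k) * a k := by
  simp_rw [mul_sum, sum_mul, mul_assoc]
  exact sum_comm' fun j k => by simp only [mem_range, mem_Icc]; omega

theorem eq_zero_of_sum_lowerTriangular_eq_zero {B : ℕ → ℕ → R} (hB : ∀ i, IsUnit (B i i))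
    {g : ℕ → R} (hg : ∀ i, ∑ j ∈ range (i + 1), B i j * g j = 0) : g = 0 := by
  refine funext fun i => ?_
  induction i using Nat.strong_induction_on with
  | _ i ih =>
    have hprev : ∑ j ∈ range i, B i j * g j = 0 :=
      sum_eq_zero fun j hj => by rw [ih j (mem_range.1 hj), Pi.zero_apply, mul_zero]
    have hsum := hg i
    rw [sum_range_succ, hprev, zero_add] at hsum
    exact (hB i).mul_right_eq_zero.1 hsum

theorem lowerTriangular_inverse_iff (A B : ℕ → ℕ → R)
    (hBA : ∀ i k, k ≤ i → ∑ j ∈ Icc k i, B i j * A j k = if i = k then 1 else 0)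
    (a f : ℕ → R) :
    (∀ j, f j = ∑ i ∈ range (j + 1), A j i * a i) ↔
      (∀ i, a i = ∑ j ∈ range (i + 1), B i j * f j) := by
  have forward (a f : ℕ → R) (hf : ∀ j, f j = ∑ i ∈ range (j + 1), A j i * a i)
      (i : ℕ) :
      a i = ∑ j ∈ range (i + 1), B i j * f j := by
    simp_rw [hf, sum_mul_sum_lowerTriangular]
    rw [sum_congr rfl fun k hk => by rw [hBA i k (mem_range_succ_iff.1 hk)]]
    simp
  refine ⟨forward a f, fun ha => ?_⟩
  set f' : ℕ → R := fun j => ∑ i ∈ range (j + 1), A j i * a i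
  have ha' := forward a f' fun _ => rfl
  have hdiag (i : ℕ) : IsUnit (B i i) :=
    IsUnit.of_mul_eq_one (A i i) (by simpa using hBA i i le_rfl)
  have hff' : f - f' = 0 := eq_zero_of_sum_lowerTriangular_eq_zero hdiag fun i => by
    simp only [Pi.sub_apply, mul_sub, sum_sub_distrib, ← ha i, ← ha' i, sub_self]
  exact fun j => sub_eq_zero.1 (congrFun hff' j)

end LowerTriangular

section QAnalogs

variable {q : ℂ}

theorem cast_choose_two_mul_two (n : ℕ) : ((n.choose 2 : ℕ) : ℤ) * 2 = n * (n - 1) := by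
  have h : ((n.choose 2 : ℕ) : ℚ) * 2 = n * (n - 1) := by rw [Nat.cast_choose_two]; ring
  exact_mod_cast h

theorem qPoch_zero_right (a q : ℂ) : qPoch a q 0 = 1 := prod_range_zero _

theorem qPoch_self_succ (q : ℂ) (n : ℕ) :
    qPoch q q (n + 1) = qPoch q q n * (1 - q ^ (n + 1)) := by
  rw [qPoch, prod_range_succ, ← qPoch, pow_succ']

theorem one_sub_pow_ne_zero (hq : ¬IsOfFinOrder q) {n : ℕ} (hn : 0 < n) : 1 - q ^ n ≠ 0 :=
  fun h => hq (isOfFinOrder_iff_pow_eq_one.2 ⟨n, hn, (sub_eq_zero.1 h).symm⟩)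

theorem qPoch_self_ne_zero (hq : ¬IsOfFinOrder q) (n : ℕ) : qPoch q q n ≠ 0 := by
  induction n with
  | zero => simp [qPoch_zero_right]
  | succ n ih => rw [qPoch_self_succ]; exact mul_ne_zero ih (one_sub_pow_ne_zero hq n.succ_pos)

theorem qBinom_zero_right (hq : ¬IsOfFinOrder q) (n : ℕ) : qBinom q n 0 = 1 := by
  rw [qBinom, qPoch_zero_right, one_mul, Nat.sub_zero, div_self (qPoch_self_ne_zero hq n)]

theorem qBinom_self (hq : ¬IsOfFinOrder q) (n : ℕ) : qBinom q n n = 1 := by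
  rw [qBinom, Nat.sub_self, qPoch_zero_right, mul_one, div_self (qPoch_self_ne_zero hq n)]

theorem qBinom_symm (q : ℂ) {n r : ℕ} (hr : r ≤ n) : qBinom q n (n - r) = qBinom q n r := by
  rw [qBinom, qBinom, Nat.sub_sub_self hr, mul_comm]

theorem qBinom_succ_succ (hq : ¬IsOfFinOrder q) {n t : ℕ} (ht : t < n) :
    qBinom q (n + 1) (t + 1) = qBinom q n (t + 1) + q ^ (n - t) * qBinom q n t := by
  obtain ⟨s, rfl⟩ : ∃ s, n = t + s + 1 := ⟨n - t - 1, by omega⟩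
  simp only [qBinom, show t + s + 1 + 1 - (t + 1) = s + 1 by omega,
    show t + s + 1 - (t + 1) = s by omega, show t + s + 1 - t = s + 1 by omega]
  rw [qPoch_self_succ q (t + s + 1), qPoch_self_succ q s, qPoch_self_succ q t]
  have := qPoch_self_ne_zero hq (t + s + 1)
  have := qPoch_self_ne_zero hq t
  have := qPoch_self_ne_zero hq s
  have := one_sub_pow_ne_zero hq (n := t + 1) (by omega)
  have := one_sub_pow_ne_zero hq (n := s + 1) (by omega)
  field_simp
  ring

noncomputable def qBinomCoeff (q : ℂ) (n t : ℕ) : ℂ :=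
  (-1) ^ t * q ^ t.choose 2 * qBinom q n t

theorem qBinomCoeff_succ_succ (hq : ¬IsOfFinOrder q) {n t : ℕ} (ht : t < n) :
    qBinomCoeff q (n + 1) (t + 1) = qBinomCoeff q n (t + 1) - q ^ n * qBinomCoeff q n t := by
  have hq_pow : q ^ t * q ^ (n - t) = q ^ n := by rw [← pow_add, Nat.add_sub_cancel' ht.le]
  simp only [qBinomCoeff, qBinom_succ_succ hq ht, Nat.choose_succ_succ', Nat.choose_one_right,
    pow_add, pow_succ]
  linear_combination -(-1) ^ t * q ^ t.choose 2 * qBinom q n t * hq_pow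

theorem qBinomCoeff_succ_self (hq : ¬IsOfFinOrder q) (n : ℕ) :
    qBinomCoeff q (n + 1) (n + 1) = -q ^ n * qBinomCoeff q n n := by
  simp only [qBinomCoeff, qBinom_self hq, Nat.choose_succ_succ', Nat.choose_one_right, pow_add,
    pow_succ]
  ring

theorem sum_qBinomCoeff_succ_mul_pow (hq : ¬IsOfFinOrder q) (x : ℂ) (n : ℕ) :
    ∑ t ∈ range (n + 2), qBinomCoeff q (n + 1) t * x ^ t =
      (1 - x * q ^ n) * ∑ t ∈ range (n + 1), qBinomCoeff q n t * x ^ t := by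
  have h0 : qBinomCoeff q (n + 1) 0 = qBinomCoeff q n 0 := by
    simp [qBinomCoeff, qBinom_zero_right hq]
  have hxS : x * q ^ n * ∑ t ∈ range (n + 1), qBinomCoeff q n t * x ^ t =
      ∑ t ∈ range n, q ^ n * qBinomCoeff q n t * x ^ (t + 1) +
        q ^ n * qBinomCoeff q n n * x ^ (n + 1) := by
    rw [sum_range_succ, mul_add, mul_sum]
    congr 1
    · exact sum_congr rfl fun t _ => by ring
    · ring
  rw [sum_range_succ', sum_range_succ, qBinomCoeff_succ_self hq, h0,
    sum_congr rfl fun t ht => by rw [qBinomCoeff_succ_succ hq (mem_range.1 ht), sub_mul],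
    sum_sub_distrib, sub_mul, one_mul, hxS, sum_range_succ' _ n]
  ring

theorem prod_one_sub_mul_pow_eq_sum (hq : ¬IsOfFinOrder q) (x : ℂ) (n : ℕ) :
    ∏ l ∈ range n, (1 - x * q ^ l) = ∑ t ∈ range (n + 1), qBinomCoeff q n t * x ^ t := by
  induction n with
  | zero => simp [qBinomCoeff, qBinom_zero_right hq]
  | succ n ih => rw [prod_range_succ, ih, sum_qBinomCoeff_succ_mul_pow hq, mul_comm]

end QAnalogs

section SymmetricPowers

variable {q : ℂ}

/-- `symPow q d j = q^{jd} + q^{-(j+1)d}`, i.e. `q^{-d/2} (z^d + z^{-d})` for `z = q^{j+1/2}`. -/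
noncomputable def symPow (q : ℂ) (d : ℤ) (j : ℕ) : ℂ :=
  q ^ ((j : ℤ) * d) + q ^ (-((j : ℤ) + 1) * d)

theorem symPow_mul_symPow_one (hq₀ : q ≠ 0) (d : ℤ) :
    symPow q d * symPow q 1 = symPow q (d + 1) + q⁻¹ • symPow q (d - 1) := by
  funext j
  simp only [Pi.mul_apply, Pi.add_apply, Pi.smul_apply, smul_eq_mul, symPow, add_mul, mul_add,
    ← zpow_neg_one, ← zpow_add₀ hq₀]
  ring_nf

theorem pow_mul_symPow_one_sub (hq₀ : q ≠ 0) {j m : ℕ} (hmj : m ≤ j) :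
    q ^ (j + 1) * (symPow q 1 j - symPow q 1 m) = (1 - q ^ (j + m + 1)) * (1 - q ^ (j - m)) := by
  simp only [symPow, ← zpow_natCast, Nat.cast_sub hmj, mul_sub, sub_mul, mul_add,
    ← zpow_add₀ hq₀, one_mul, mul_one]
  push_cast
  ring_nf
  rw [zpow_zero]
  ring

noncomputable def symSpan (q : ℂ) (s : ℕ) : Submodule ℂ (ℕ → ℂ) :=
  Submodule.span ℂ (symPow q '' {d | |d| ≤ s})

theorem symPow_mem_symSpan {d : ℤ} {s : ℕ} (hd : |d| ≤ s) : symPow q d ∈ symSpan q s :=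
  Submodule.subset_span ⟨d, hd, rfl⟩

theorem symSpan_mono : Monotone (symSpan q) := fun s t hst =>
  Submodule.span_mono <| Set.image_mono fun d (hd : |d| ≤ s) =>
    show |d| ≤ t from hd.trans (Nat.cast_le.2 hst)

theorem one_mem_symSpan_zero : (1 : ℕ → ℂ) ∈ symSpan q 0 := by
  have h : (1 : ℕ → ℂ) = (2 : ℂ)⁻¹ • symPow q 0 := by
    funext j
    norm_num [symPow]
  rw [h]
  exact Submodule.smul_mem _ _ (symPow_mem_symSpan (by simp))

theorem mul_symPow_one_mem_symSpan (hq₀ : q ≠ 0) {s : ℕ} {u : ℕ → ℂ}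
    (hu : u ∈ symSpan q s) : u * symPow q 1 ∈ symSpan q (s + 1) := by
  have hmap : (symSpan q s).map (LinearMap.mulRight ℂ (symPow q 1)) ≤ symSpan q (s + 1) := by
    rw [symSpan, Submodule.map_span_le]
    rintro _ ⟨d, hd : |d| ≤ s, rfl⟩
    rw [LinearMap.mulRight_apply, symPow_mul_symPow_one hq₀]
    refine add_mem (symPow_mem_symSpan ?_) (Submodule.smul_mem _ _ (symPow_mem_symSpan ?_))
    · push_cast; exact (abs_add_le _ _).trans (by simpa using hd)
    · push_cast; exact (abs_sub _ _).trans (by simpa using hd)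
  exact hmap (Submodule.mem_map_of_mem hu)

end SymmetricPowers

section NodalProduct

variable {q : ℂ}

noncomputable def nodalProd (q : ℂ) (k j : ℕ) : ℂ :=
  ∏ m ∈ range k, (symPow q 1 j - symPow q 1 m)

theorem nodalProd_eq_zero {k j : ℕ} (hjk : j < k) : nodalProd q k j = 0 :=
  prod_eq_zero (mem_range.2 hjk) (sub_self _)

theorem nodalProd_mem_symSpan (hq₀ : q ≠ 0) (k : ℕ) : nodalProd q k ∈ symSpan q k := by
  induction k with
  | zero =>
    convert one_mem_symSpan_zero
    funext j
    simp [nodalProd]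
  | succ k ih =>
    have h : nodalProd q (k + 1) = nodalProd q k * symPow q 1 - symPow q 1 k • nodalProd q k := by
      funext j
      simp only [nodalProd, prod_range_succ, Pi.sub_apply, Pi.mul_apply, Pi.smul_apply, smul_eq_mul]
      ring
    rw [h]
    exact sub_mem (mul_symPow_one_mem_symSpan hq₀ ih)
      (Submodule.smul_mem _ _ (symSpan_mono k.le_succ ih))

theorem pow_mul_nodalProd_mul_qPoch (hq₀ : q ≠ 0) {k j : ℕ} (hkj : k ≤ j) :
    q ^ ((j + 1) * k) * nodalProd q k j * qPoch q q (j - k) = qPoch q q (j + k) := by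
  induction k with
  | zero => simp [nodalProd]
  | succ k ih =>
    have hsucc : qPoch q q (j - k) = qPoch q q (j - (k + 1)) * (1 - q ^ (j - k)) := by
      have h := qPoch_self_succ q (j - (k + 1))
      rwa [show j - (k + 1) + 1 = j - k by omega] at h
    rw [← add_assoc, qPoch_self_succ, ← ih (by omega), hsucc, nodalProd, prod_range_succ,
      ← nodalProd, Nat.mul_succ, pow_add]
    linear_combination q ^ ((j + 1) * k) * nodalProd q k j * qPoch q q (j - (k + 1)) *
      pow_mul_symPow_one_sub hq₀ (by omega : k ≤ j)

end NodalProduct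

noncomputable def habiroM (q : ℂ) (j i : ℕ) : ℂ :=
  q ^ (-(i * (j - i) : ℤ)) * qBinom q (j + i) (2 * i)

section HabiroM

variable {q : ℂ}

theorem habiroM_eq_mul_nodalProd (hq₀ : q ≠ 0) (hq : ¬IsOfFinOrder q) {k j : ℕ}
    (hkj : k ≤ j) :
    habiroM q j k = q ^ (k * k + k) / qPoch q q (2 * k) * nodalProd q k j := by
  rw [habiroM, qBinom, show j + k - 2 * k = j - k by omega,
    ← pow_mul_nodalProd_mul_qPoch hq₀ hkj]
  have := qPoch_self_ne_zero hq (j - k)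
  have := qPoch_self_ne_zero hq (2 * k)
  have hexp : q ^ (-(k * (j - k) : ℤ)) * q ^ ((j + 1) * k) = q ^ (k * k + k) := by
    simp only [← zpow_natCast, ← zpow_add₀ hq₀]
    push_cast
    ring_nf
  field_simp
  linear_combination nodalProd q k j * hexp

theorem habiroM_self (hq : ¬IsOfFinOrder q) (i : ℕ) : habiroM q i i = 1 := by
  simp [habiroM, ← two_mul, qBinom_self hq]

end HabiroM

/-- The coefficient of `z^t` in `∏_{l ≤ 2i} (1 - q^{l + 1 - i} z)`. -/
noncomputable def centredCoeff (q : ℂ) (i t : ℕ) : ℂ :=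
  qBinomCoeff q (2 * i + 1) t * (q ^ (1 - i : ℤ)) ^ t

section CentredCoeff

variable {q : ℂ}

theorem centredCoeff_reflect (hq₀ : q ≠ 0) {i j : ℕ} (hji : j ≤ i) :
    centredCoeff q i (i + 1 + j) = -q ^ (2 * j + 1) * centredCoeff q i (i - j) := by
  have hbinom : qBinom q (2 * i + 1) (i + 1 + j) = qBinom q (2 * i + 1) (i - j) := by
    rw [← qBinom_symm q (show i - j ≤ 2 * i + 1 by omega),
      show 2 * i + 1 - (i - j) = i + 1 + j by omega]
  have hsign : (-1 : ℂ) ^ (i + 1 + j) = -(-1) ^ (i - j) := by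
    rw [show i + 1 + j = i - j + 2 * j + 1 by omega, pow_succ, pow_add, pow_mul]
    norm_num
  have hexp : q ^ (i + 1 + j).choose 2 * (q ^ (1 - i : ℤ)) ^ (i + 1 + j) =
      q ^ (2 * j + 1) * (q ^ (i - j).choose 2 * (q ^ (1 - i : ℤ)) ^ (i - j)) := by
    simp only [← zpow_natCast, ← zpow_mul, ← zpow_add₀ hq₀]
    congr 1
    have h₁ := cast_choose_two_mul_two (i + 1 + j)
    have h₂ := cast_choose_two_mul_two (i - j)
    push_cast [Nat.cast_sub hji] at h₁ h₂ ⊢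
    linarith
  simp only [centredCoeff, qBinomCoeff, hbinom, hsign]
  linear_combination -(-1) ^ (i - j) * qBinom q (2 * i + 1) (i - j) * hexp

theorem sum_centredCoeff_mul_pow (hq₀ : q ≠ 0) (i : ℕ) (z : ℂ) :
    ∑ t ∈ range (2 * i + 2), centredCoeff q i t * z ^ t =
      ∑ j ∈ range (i + 1),
        centredCoeff q i (i - j) * (z ^ (i - j) - q ^ (2 * j + 1) * z ^ (i + 1 + j)) := by
  rw [show 2 * i + 2 = (i + 1) + (i + 1) by omega, sum_range_add, ← sum_range_reflect,
    ← sum_add_distrib]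
  refine sum_congr rfl fun j hj => ?_
  rw [centredCoeff_reflect hq₀ (mem_range_succ_iff.1 hj), show i + 1 - 1 - j = i - j by omega]
  ring

theorem sum_centredCoeff_mul_zpow_eq_zero (hq₀ : q ≠ 0) (hq : ¬IsOfFinOrder q) {i : ℕ}
    {d : ℤ} (hd : |d| < i) :
    ∑ t ∈ range (2 * i + 2), centredCoeff q i t * (q ^ d) ^ t = 0 := by
  simp only [centredCoeff, mul_assoc, ← mul_pow]
  rw [← prod_one_sub_mul_pow_eq_sum hq]
  obtain ⟨hd₁, hd₂⟩ := abs_lt.1 hd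
  obtain ⟨l, hl⟩ : ∃ l : ℕ, (l : ℤ) = i - 1 - d := ⟨(i - 1 - d).toNat, by omega⟩
  refine prod_eq_zero (mem_range.2 (by omega : l < 2 * i + 1)) ?_
  rw [← zpow_natCast, hl, ← zpow_add₀ hq₀, ← zpow_add₀ hq₀, sub_eq_zero]
  ring_nf
  exact (zpow_zero q).symm

end CentredCoeff

noncomputable def habiroN (q : ℂ) (i j : ℕ) : ℂ :=
  (-1 : ℂ) ^ (i + j) * q ^ (-(((i : ℤ) - j) * ((i : ℤ) + j - 1) / 2)) *
    qBinom q (2 * i) (i - j) * (qInt q (2 * j + 1) / qInt q (i + j + 1))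

section HabiroN

variable {q : ℂ}

theorem habiroN_exponent {i j : ℕ} (hji : j ≤ i) :
    -(((i : ℤ) - j) * ((i : ℤ) + j - 1) / 2) = (i - j).choose 2 + (1 - i) * (i - j : ℕ) := by
  rw [neg_eq_iff_eq_neg, Int.ediv_eq_of_eq_mul_left two_ne_zero]
  have h := cast_choose_two_mul_two (i - j)
  push_cast [Nat.cast_sub hji] at h ⊢
  linear_combination h

theorem habiroN_mul_one_sub_pow (hq₀ : q ≠ 0) (hq : ¬IsOfFinOrder q) {i j : ℕ}
    (hji : j ≤ i) :
    habiroN q i j * (1 - q ^ (2 * i + 1)) = centredCoeff q i (i - j) * (1 - q ^ (2 * j + 1)) := by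
  have hsign : (-1 : ℂ) ^ (i + j) = (-1) ^ (i - j) := by
    rw [show i + j = i - j + 2 * j by omega, pow_add, pow_mul]
    norm_num
  have hpow : q ^ ((i - j).choose 2 + (1 - i) * (i - j : ℕ) : ℤ) =
      q ^ (i - j).choose 2 * (q ^ (1 - i : ℤ)) ^ (i - j) := by
    rw [zpow_add₀ hq₀, zpow_mul, zpow_natCast, zpow_natCast]
  have hbinom : qBinom q (2 * i) (i - j) * (1 - q ^ (2 * i + 1)) =
      qBinom q (2 * i + 1) (i - j) * (1 - q ^ (i + j + 1)) := by
    simp only [qBinom, show 2 * i + 1 - (i - j) = i + j + 1 by omega,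
      show 2 * i - (i - j) = i + j by omega, qPoch_self_succ]
    have := qPoch_self_ne_zero hq (i - j)
    have := qPoch_self_ne_zero hq (i + j)
    have := one_sub_pow_ne_zero hq (n := i + j + 1) (by omega)
    field_simp
  have := one_sub_pow_ne_zero hq (n := i + j + 1) (by omega)
  rw [habiroN, habiroN_exponent hji, hpow, hsign, centredCoeff, qBinomCoeff, qInt, qInt,
    div_div_div_cancel_right₀ (by simpa using one_sub_pow_ne_zero hq one_pos)]
  field_simp
  linear_combination (1 - q ^ (2 * j + 1)) * hbinom

end HabiroN

section Orthogonality

variable {q : ℂ}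

theorem one_sub_pow_mul_symPow (hq₀ : q ≠ 0) (d : ℤ) {i j : ℕ} (hji : j ≤ i) :
    (1 - q ^ (2 * j + 1)) * symPow q d j =
      q ^ (i * d) * ((q ^ (-d)) ^ (i - j) - q ^ (2 * j + 1) * (q ^ (-d)) ^ (i + 1 + j)) +
        q ^ (-(i + 1) * d) * ((q ^ d) ^ (i - j) - q ^ (2 * j + 1) * (q ^ d) ^ (i + 1 + j)) := by
  simp only [symPow, ← zpow_natCast, ← zpow_mul, Nat.cast_sub hji, mul_sub, sub_mul, mul_add,
    ← zpow_add₀ hq₀, one_mul]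
  push_cast
  ring_nf

theorem sum_habiroN_mul_symPow_eq_zero (hq₀ : q ≠ 0) (hq : ¬IsOfFinOrder q) {i : ℕ}
    {d : ℤ} (hd : |d| < i) : ∑ j ∈ range (i + 1), habiroN q i j * symPow q d j = 0 := by
  have key : (∑ j ∈ range (i + 1), habiroN q i j * symPow q d j) * (1 - q ^ (2 * i + 1)) =
      q ^ (i * d) * ∑ t ∈ range (2 * i + 2), centredCoeff q i t * (q ^ (-d)) ^ t +
        q ^ (-(i + 1) * d) * ∑ t ∈ range (2 * i + 2), centredCoeff q i t * (q ^ d) ^ t := by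
    rw [sum_centredCoeff_mul_pow hq₀, sum_centredCoeff_mul_pow hq₀, mul_sum, mul_sum,
      ← sum_add_distrib, sum_mul]
    refine sum_congr rfl fun j hj => ?_
    have hji := mem_range_succ_iff.1 hj
    rw [mul_right_comm, habiroN_mul_one_sub_pow hq₀ hq hji, mul_assoc,
      one_sub_pow_mul_symPow hq₀ d hji]
    ring
  rw [sum_centredCoeff_mul_zpow_eq_zero hq₀ hq (by rwa [abs_neg]),
    sum_centredCoeff_mul_zpow_eq_zero hq₀ hq hd, mul_zero, mul_zero, add_zero] at key
  exact (mul_eq_zero.1 key).resolve_right (one_sub_pow_ne_zero hq (by omega))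

theorem sum_habiroN_mul_eq_zero_of_mem_symSpan (hq₀ : q ≠ 0) (hq : ¬IsOfFinOrder q)
    {i s : ℕ} (hsi : s < i) {u : ℕ → ℂ} (hu : u ∈ symSpan q s) :
    ∑ j ∈ range (i + 1), habiroN q i j * u j = 0 := by
  let L : (ℕ → ℂ) →ₗ[ℂ] ℂ := ∑ j ∈ range (i + 1), habiroN q i j • LinearMap.proj j
  have hL (v : ℕ → ℂ) : L v = ∑ j ∈ range (i + 1), habiroN q i j * v j := by simp [L]
  have hker : symSpan q s ≤ LinearMap.ker L := by
    rw [symSpan, Submodule.span_le]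
    rintro _ ⟨d, hd : |d| ≤ s, rfl⟩
    rw [SetLike.mem_coe, LinearMap.mem_ker, hL]
    exact sum_habiroN_mul_symPow_eq_zero hq₀ hq (hd.trans_lt (by exact_mod_cast hsi))
  rw [← hL]
  exact hker hu

theorem habiroN_self (hq : ¬IsOfFinOrder q) (i : ℕ) : habiroN q i i = 1 := by
  have h₁ := one_sub_pow_ne_zero hq (n := 2 * i + 1) (by omega)
  have h₂ := one_sub_pow_ne_zero hq (n := 1) one_pos
  rw [pow_one] at h₂
  simp [habiroN, qBinom_zero_right hq, ← two_mul, qInt, h₁, h₂]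

theorem sum_habiroN_mul_habiroM (hq₀ : q ≠ 0) (hq : ¬IsOfFinOrder q) {i k : ℕ}
    (hki : k ≤ i) :
    ∑ j ∈ Icc k i, habiroN q i j * habiroM q j k = if i = k then 1 else 0 := by
  rcases hki.eq_or_lt with rfl | hki
  · simp [habiroN_self hq, habiroM_self hq]
  set c := q ^ (k * k + k) / qPoch q q (2 * k)
  calc ∑ j ∈ Icc k i, habiroN q i j * habiroM q j k
      = ∑ j ∈ range (i + 1), habiroN q i j * (c * nodalProd q k j) := by
        refine sum_subset_zero_on_sdiff (fun j => by simp only [mem_Icc, mem_range]; omega)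
          (fun j hj => ?_) fun j hj => ?_
        · rw [nodalProd_eq_zero (by simp only [mem_sdiff, mem_range, mem_Icc] at hj; omega),
            mul_zero, mul_zero]
        · rw [habiroM_eq_mul_nodalProd hq₀ hq (mem_Icc.1 hj).1]
    _ = c * ∑ j ∈ range (i + 1), habiroN q i j * nodalProd q k j := by
        rw [mul_sum]; exact sum_congr rfl fun j _ => by ring
    _ = if i = k then 1 else 0 := by
        rw [sum_habiroN_mul_eq_zero_of_mem_symSpan hq₀ hq hki (nodalProd_mem_symSpan hq₀ k),
          mul_zero, if_neg hki.ne']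

end Orthogonality

/-- The transforms `f_j = ∑_{i=0}^{j} q^{−i(j−i)} C_q(j+i,2i) a_i` and
`a_i = ∑_{j=0}^{i} (−1)^{i+j} q^{−(i−j)(i+j−1)/2} C_q(2i,i−j) ([2j+1]_q/[i+j+1]_q) f_j`
are mutually inverse. -/
theorem habiro_inversion_pair (q : ℂ) (hq0 : 0 < ‖q‖) (hq1 : ‖q‖ < 1)
    (a f : ℕ → ℂ) :
    (∀ j : ℕ, f j = ∑ i ∈ Finset.range (j + 1),
        q ^ (-(i * (j - i) : ℤ)) * qBinom q (j + i) (2 * i) * a i) ↔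
    (∀ i : ℕ, a i = ∑ j ∈ Finset.range (i + 1),
        (-1 : ℂ) ^ (i + j) * q ^ (-(((i : ℤ) - j) * ((i : ℤ) + j - 1) / 2)) *
          qBinom q (2 * i) (i - j) * (qInt q (2 * j + 1) / qInt q (i + j + 1)) * f j) := by
  have hq₀ : q ≠ 0 := norm_pos_iff.1 hq0
  have hq : ¬IsOfFinOrder q := fun h => hq1.ne h.norm_eq_one
  exact lowerTriangular_inverse_iff (habiroM q) (habiroN q)
    (fun _ _ hki => sum_habiroN_mul_habiroM hq₀ hq hki) a f
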